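/- arXiv:math/0010139 — 2 statements merged into one kernel-verified Lean document; each statement's English description precedes it below -/
import Mathlib

section
/- If a unital operator algebra A has length at most l with constant C (i.e., every matrix over A factors as alternating products of scalar matrices and diagonal matrices over A of total norm at most C times the norm), then every bounded unital homomorphism φ of A into B(H) is completely bounded with ‖φ‖_cb ≤ C·‖φ‖^l. -/
set_option maxHeartbeats 1000000


/- STATEMENT 0: If a unital operator algebra `A` (realized as a unital subalgebra `S` of `B(H)`)
has length at most `l` with constant `C`, then every bounded unital homomorphism `φ : A → B(K)`
with `‖φ‖ ≤ Cφ` is completely bounded with `‖φ‖_cb ≤ C · Cφ^l`. -/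

variable {H K : Type*} [NormedAddCommGroup H] [InnerProductSpace ℂ H] [CompleteSpace H]
  [NormedAddCommGroup K] [InnerProductSpace ℂ K] [CompleteSpace K]

/-- The bounded operator on the column Hilbert spaces induced by a matrix of bounded operators. -/
noncomputable def matCLM {E F : Type*} [NormedAddCommGroup E] [InnerProductSpace ℂ E]
    [NormedAddCommGroup F] [InnerProductSpace ℂ F]
    {k n : ℕ} (X : Matrix (Fin k) (Fin n) (F →L[ℂ] E)) :
    PiLp 2 (fun _ : Fin n => F) →L[ℂ] PiLp 2 (fun _ : Fin k => E) :=
  ((PiLp.continuousLinearEquiv 2 ℂ (fun _ : Fin k => E)).symm.toContinuousLinearMap).comp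
    ((ContinuousLinearMap.pi fun i => ∑ j, (X i j).comp (ContinuousLinearMap.proj j)).comp
      (PiLp.continuousLinearEquiv 2 ℂ (fun _ : Fin n => F)).toContinuousLinearMap)

/-- The operator norm of a matrix of bounded operators. -/
noncomputable def matNorm {E F : Type*} [NormedAddCommGroup E] [InnerProductSpace ℂ E]
    [NormedAddCommGroup F] [InnerProductSpace ℂ F]
    {k n : ℕ} (X : Matrix (Fin k) (Fin n) (F →L[ℂ] E)) : ℝ :=
  ‖matCLM X‖

/-- The embedding of a scalar matrix as a matrix of operators (`α ⊗ I`). -/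
noncomputable def scalarMat {k n : ℕ} (α : Matrix (Fin k) (Fin n) ℂ) :
    Matrix (Fin k) (Fin n) (H →L[ℂ] H) :=
  α.map fun c => c • (1 : H →L[ℂ] H)

/-! ### Auxiliary material -/

open scoped Matrix.Norms.L2Operator

namespace CBAux

variable {E F : Type*} [NormedAddCommGroup E] [InnerProductSpace ℂ E]
  [NormedAddCommGroup F] [InnerProductSpace ℂ F]

lemma le_of_sq_le_sq {a b : ℝ} (h : a ^ 2 ≤ b ^ 2) (hb : 0 ≤ b) : a ≤ b := by
  nlinarith [sq_nonneg (a - b), sq_nonneg (a + b)]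

lemma matCLM_apply {k n : ℕ} (X : Matrix (Fin k) (Fin n) (F →L[ℂ] E))
    (v : PiLp 2 (fun _ : Fin n => F)) (i : Fin k) :
    matCLM X v i = ∑ j, X i j (v j) := by
  simp [matCLM, ContinuousLinearMap.sum_apply]

lemma matNorm_nonneg {k n : ℕ} (X : Matrix (Fin k) (Fin n) (F →L[ℂ] E)) :
    0 ≤ matNorm X := by unfold matNorm; exact norm_nonneg (matCLM X)

lemma piLp_norm_apply_le {ι : Type*} [Fintype ι] {β : ι → Type*}
    [∀ i, SeminormedAddCommGroup (β i)] (x : PiLp 2 β) (i : ι) : ‖x i‖ ≤ ‖x‖ := by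
  refine le_of_sq_le_sq ?_ (norm_nonneg x)
  rw [PiLp.norm_sq_eq_of_L2]
  exact Finset.single_le_sum (f := fun i => ‖x i‖ ^ 2) (fun _ _ => sq_nonneg _)
    (Finset.mem_univ i)

lemma piLp_sum_apply {p : ENNReal} {ι : Type*} {β : ι → Type*}
    [∀ i, SeminormedAddCommGroup (β i)]
    {κ : Type*} (s : Finset κ) (f : κ → PiLp p β) (i : ι) :
    (∑ j ∈ s, f j) i = ∑ j ∈ s, f j i := by
  classical
  induction s using Finset.induction_on with
  | empty => rfl
  | insert _ _ h ih => rw [Finset.sum_insert h, Finset.sum_insert h, ← ih]; rfl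

lemma matNorm_entry_le {k n : ℕ} (X : Matrix (Fin k) (Fin n) (F →L[ℂ] E))
    (i : Fin k) (j : Fin n) : ‖X i j‖ ≤ matNorm X := by
  refine ContinuousLinearMap.opNorm_le_bound _ (matNorm_nonneg X) fun ξ => ?_
  classical
  have h1 : matCLM X ((WithLp.equiv 2 (Fin n → F)).symm (Pi.single j ξ)) i
      = X i j ξ := by
    rw [matCLM_apply]
    simp only [WithLp.equiv_symm_apply, PiLp.toLp_apply, WithLp.ofLp_toLp]
    rw [Fintype.sum_eq_single j (fun j' hj' => by
      rw [Pi.single_eq_of_ne hj', map_zero]), Pi.single_eq_same]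
  have h2 : ‖((WithLp.equiv 2 (Fin n → F)).symm (Pi.single j ξ))‖ = ‖ξ‖ := by
    rw [PiLp.norm_eq_of_L2]
    simp only [WithLp.equiv_symm_apply, PiLp.toLp_apply, WithLp.ofLp_toLp]
    rw [Fintype.sum_eq_single j (fun j' hj' => by
      rw [Pi.single_eq_of_ne hj', norm_zero]; ring), Pi.single_eq_same,
      Real.sqrt_sq (norm_nonneg ξ)]
  calc ‖X i j ξ‖ = ‖matCLM X ((WithLp.equiv 2 (Fin n → F)).symm (Pi.single j ξ)) i‖ := by
        rw [h1]
    _ ≤ ‖matCLM X ((WithLp.equiv 2 (Fin n → F)).symm (Pi.single j ξ))‖ :=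
        piLp_norm_apply_le _ i
    _ ≤ ‖matCLM X‖ * ‖((WithLp.equiv 2 (Fin n → F)).symm (Pi.single j ξ))‖ :=
        (matCLM X).le_opNorm _
    _ = matNorm X * ‖ξ‖ := by rw [h2]; unfold matNorm; try rfl

lemma matNorm_eq_zero {k n : ℕ} (X : Matrix (Fin k) (Fin n) (F →L[ℂ] E))
    (h : ∀ i j, X i j = 0) : matNorm X = 0 := by
  have : matCLM X = 0 := by
    refine ContinuousLinearMap.ext fun v => PiLp.ext fun i => ?_
    simp [matCLM_apply, h]
  have h0 : matNorm X = ‖matCLM X‖ := rfl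
  rw [h0, this]
  exact ContinuousLinearMap.opNorm_zero

lemma matNorm_diagonal_le {n : ℕ} (f : Fin n → (E →L[ℂ] E)) {B : ℝ} (hB : 0 ≤ B)
    (h : ∀ p, ‖f p‖ ≤ B) : matNorm (Matrix.diagonal f) ≤ B := by
  refine ContinuousLinearMap.opNorm_le_bound _ hB fun v => ?_
  refine le_of_sq_le_sq ?_ (mul_nonneg hB (norm_nonneg v))
  rw [mul_pow, PiLp.norm_sq_eq_of_L2, PiLp.norm_sq_eq_of_L2]
  calc ∑ i, ‖matCLM (Matrix.diagonal f) v i‖ ^ 2 = ∑ i, ‖f i (v i)‖ ^ 2 := by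
        refine Finset.sum_congr rfl fun i _ => ?_
        rw [matCLM_apply]
        rw [Fintype.sum_eq_single i (fun j hj => by
          rw [Matrix.diagonal_apply_ne' f hj, ContinuousLinearMap.zero_apply])]
        rw [Matrix.diagonal_apply_eq]
    _ ≤ ∑ i, (B * ‖v i‖) ^ 2 := by
        refine Finset.sum_le_sum fun i _ => ?_
        refine pow_le_pow_left₀ (norm_nonneg _) ?_ 2
        exact ((f i).le_opNorm (v i)).trans
          (mul_le_mul_of_nonneg_right (h i) (norm_nonneg _))
    _ = B ^ 2 * ∑ i, ‖v i‖ ^ 2 := by rw [Finset.mul_sum]; simp [mul_pow]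

lemma matCLM_mul {k n q : ℕ} (A : Matrix (Fin k) (Fin n) (E →L[ℂ] E))
    (B : Matrix (Fin n) (Fin q) (E →L[ℂ] E)) :
    matCLM (A * B) = (matCLM A).comp (matCLM B) := by
  refine ContinuousLinearMap.ext fun v => PiLp.ext fun i => ?_
  rw [ContinuousLinearMap.comp_apply, matCLM_apply, matCLM_apply]
  simp only [Matrix.mul_apply, ContinuousLinearMap.sum_apply,
    ContinuousLinearMap.mul_apply, matCLM_apply, map_sum]
  exact Finset.sum_comm

lemma matNorm_mul_le {k n q : ℕ} (A : Matrix (Fin k) (Fin n) (E →L[ℂ] E))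
    (B : Matrix (Fin n) (Fin q) (E →L[ℂ] E)) :
    matNorm (A * B) ≤ matNorm A * matNorm B := by
  rw [matNorm, matCLM_mul]
  exact ContinuousLinearMap.opNorm_comp_le _ _

lemma matNorm_listProd_mul {n q : ℕ} (L : List (Matrix (Fin n) (Fin n) (E →L[ℂ] E)))
    (M : Matrix (Fin n) (Fin q) (E →L[ℂ] E)) :
    matNorm (L.prod * M) ≤ (L.map matNorm).prod * matNorm M := by
  induction L with
  | nil => simp
  | cons a L ih =>
    rw [List.prod_cons, List.map_cons, List.prod_cons, Matrix.mul_assoc, mul_assoc]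
    exact (matNorm_mul_le _ _).trans (mul_le_mul_of_nonneg_left ih (matNorm_nonneg a))

/-- Upper bound: `‖α ⊗ 1_E‖ ≤ ‖α‖` (L2 operator norm). -/
lemma matNorm_scalarMat_le {k n : ℕ} (α : Matrix (Fin k) (Fin n) ℂ) :
    matNorm (scalarMat (H := E) α) ≤ ‖α‖ := by
  refine ContinuousLinearMap.opNorm_le_bound _ (norm_nonneg _) fun v => ?_
  set W := Submodule.span ℂ (Set.range fun j => v j) with hW
  have hWfd : FiniteDimensional ℂ W := FiniteDimensional.span_of_finite ℂ (Set.finite_range _)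
  set dW := Module.finrank ℂ W with hdW
  let b := stdOrthonormalBasis ℂ W
  let V : Fin n → W := fun j => ⟨v j, Submodule.subset_span ⟨j, rfl⟩⟩
  let c : Fin n → EuclideanSpace ℂ (Fin dW) := fun j => b.repr (V j)
  have hvc : ∀ j, ‖v j‖ = ‖c j‖ := fun j => by
    rw [b.repr.norm_map (V j)]; rfl
  refine le_of_sq_le_sq ?_ (mul_nonneg (norm_nonneg _) (norm_nonneg _))
  rw [mul_pow, PiLp.norm_sq_eq_of_L2, PiLp.norm_sq_eq_of_L2]
  have happly : ∀ i, matCLM (scalarMat (H := E) α) v i = ∑ j, α i j • v j := by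
    intro i
    rw [matCLM_apply]
    refine Finset.sum_congr rfl fun j _ => ?_
    simp [scalarMat, Matrix.map_apply]
  calc ∑ i, ‖matCLM (scalarMat (H := E) α) v i‖ ^ 2
      = ∑ i, ∑ β, ‖∑ j, α i j * c j β‖ ^ 2 := by
        refine Finset.sum_congr rfl fun i _ => ?_
        rw [happly i]
        have h1 : (∑ j, α i j • v j) = ((∑ j, α i j • V j : W) : E) := by
          rw [Submodule.coe_sum]
          exact Finset.sum_congr rfl fun j _ => rfl
        have h2 : ‖(∑ j, α i j • V j : W)‖
            = ‖(∑ j, α i j • c j : EuclideanSpace ℂ (Fin dW))‖ := by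
          rw [← b.repr.norm_map (∑ j, α i j • V j)]
          congr 1
          rw [map_sum]
          exact Finset.sum_congr rfl fun j _ => by rw [map_smul]
        have h3 : ‖∑ j, α i j • v j‖
            = ‖(∑ j, α i j • c j : EuclideanSpace ℂ (Fin dW))‖ := by
          rw [h1, ← h2]; rfl
        rw [h3, PiLp.norm_sq_eq_of_L2]
        refine Finset.sum_congr rfl fun β _ => ?_
        have h4 : (∑ j, α i j • c j : EuclideanSpace ℂ (Fin dW)) β = ∑ j, α i j * c j β :=
          (piLp_sum_apply Finset.univ (fun j => α i j • c j) β).trans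
            (Finset.sum_congr rfl fun j _ => rfl)
        rw [h4]
    _ = ∑ β, ∑ i, ‖∑ j, α i j * c j β‖ ^ 2 := Finset.sum_comm
    _ ≤ ∑ β, (‖α‖ * ‖(WithLp.equiv 2 (Fin n → ℂ)).symm (fun j => c j β)‖) ^ 2 := by
        refine Finset.sum_le_sum fun β _ => ?_
        have hmv := Matrix.l2_opNorm_mulVec α
          ((WithLp.equiv 2 (Fin n → ℂ)).symm (fun j => c j β))
        have hnorm : (∑ i, ‖∑ j, α i j * c j β‖ ^ 2)
            = ‖(EuclideanSpace.equiv (Fin k) ℂ).symm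
                (Matrix.mulVec α ((WithLp.equiv 2 (Fin n → ℂ))
                  ((WithLp.equiv 2 (Fin n → ℂ)).symm (fun j => c j β))))‖ ^ 2 := by
          rw [PiLp.norm_sq_eq_of_L2]
          exact Finset.sum_congr rfl fun i _ => rfl
        rw [hnorm]
        exact pow_le_pow_left₀ (norm_nonneg _) hmv 2
    _ = ‖α‖ ^ 2 * ∑ β, ∑ j, ‖c j β‖ ^ 2 := by
        rw [Finset.mul_sum]
        refine Finset.sum_congr rfl fun β _ => ?_
        rw [mul_pow]
        congr 1
        rw [PiLp.norm_sq_eq_of_L2]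
        exact Finset.sum_congr rfl fun j _ => rfl
    _ = ‖α‖ ^ 2 * ∑ j, ‖v j‖ ^ 2 := by
        congr 1
        rw [Finset.sum_comm]
        exact Finset.sum_congr rfl fun j _ => by rw [hvc j, PiLp.norm_sq_eq_of_L2]

/-- Lower bound: if `E` contains a unit vector then `‖α‖ ≤ ‖α ⊗ 1_E‖`. -/
lemma le_matNorm_scalarMat {k n : ℕ} (e : E) (he : ‖e‖ = 1) (α : Matrix (Fin k) (Fin n) ℂ) :
    ‖α‖ ≤ matNorm (scalarMat (H := E) α) := by
  refine le_trans (le_of_eq (Matrix.l2_opNorm_def α)) ?_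
  apply ContinuousLinearMap.opNorm_le_bound
  · exact matNorm_nonneg (scalarMat (H := E) α)
  intro x
  have hvnorm : ‖(WithLp.equiv 2 (Fin n → E)).symm (fun j => x j • e)‖ = ‖x‖ := by
    rw [PiLp.norm_eq_of_L2, PiLp.norm_eq_of_L2]
    congr 1
    refine Finset.sum_congr rfl fun j _ => ?_
    simp only [WithLp.equiv_symm_apply, PiLp.toLp_apply, WithLp.ofLp_toLp]
    rw [norm_smul, he, mul_one]
  have happly : ∀ i, matCLM (scalarMat (H := E) α)
      ((WithLp.equiv 2 (Fin n → E)).symm (fun j => x j • e)) i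
      = (∑ j, α i j * x j) • e := by
    intro i
    rw [matCLM_apply]
    have hterm : ∀ j, (scalarMat (H := E) α) i j
        ((WithLp.equiv 2 (Fin n → E)).symm (fun j => x j • e) j) = (α i j * x j) • e := by
      intro j
      simp only [WithLp.equiv_symm_apply, PiLp.toLp_apply, WithLp.ofLp_toLp]
      show (α i j • (1 : E →L[ℂ] E)) (x j • e) = _
      rw [ContinuousLinearMap.smul_apply, ContinuousLinearMap.one_apply, smul_smul]
    rw [Finset.sum_congr rfl fun j _ => hterm j, ← Finset.sum_smul]
  have step2 : ‖matCLM (scalarMat (H := E) α)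
      ((WithLp.equiv 2 (Fin n → E)).symm (fun j => x j • e))‖
      ≤ matNorm (scalarMat (H := E) α) * ‖x‖ := by
    rw [← hvnorm]
    exact (matCLM (scalarMat (H := E) α)).le_opNorm _
  refine le_trans (le_of_eq ?_) step2
  rw [EuclideanSpace.norm_eq, PiLp.norm_eq_of_L2]
  congr 1
  refine Finset.sum_congr rfl fun i _ => ?_
  rw [happly i, norm_smul, he, mul_one]
  rfl

lemma scalarMat_eq {a b : ℕ} (β : Matrix (Fin a) (Fin b) ℂ) :
    scalarMat (H := E) β = β.map (algebraMap ℂ (E →L[ℂ] E)) := by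
  ext i j
  simp [scalarMat, Matrix.map_apply, Algebra.algebraMap_eq_smul_one]

/-- The "word" `α₀ D₁ α₁ ⋯ D_l α_l` over an arbitrary `ℂ`-algebra. -/
noncomputable def word {R : Type*} [Ring R] [Algebra ℂ R] {m k n : ℕ}
    (α0 : Matrix (Fin k) (Fin n) ℂ) (αl : Matrix (Fin n) (Fin k) ℂ)
    (αmid : Fin m → Matrix (Fin n) (Fin n) ℂ) (d : Fin (m + 1) → Fin n → R) :
    Matrix (Fin k) (Fin k) R :=
  α0.map (algebraMap ℂ R) *
    (List.ofFn fun i : Fin m =>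
      Matrix.diagonal (d i.castSucc) * (αmid i).map (algebraMap ℂ R)).prod *
    Matrix.diagonal (d (Fin.last m)) * αl.map (algebraMap ℂ R)

lemma word_map {R R' : Type*} [Ring R] [Algebra ℂ R] [Ring R'] [Algebra ℂ R']
    (f : R →ₐ[ℂ] R') {m k n : ℕ} (α0 : Matrix (Fin k) (Fin n) ℂ)
    (αl : Matrix (Fin n) (Fin k) ℂ) (αmid : Fin m → Matrix (Fin n) (Fin n) ℂ)
    (d : Fin (m + 1) → Fin n → R) :
    (word α0 αl αmid d).map f = word α0 αl αmid (fun i p => f (d i p)) := by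
  classical
  show (word α0 αl αmid d).map ⇑f.toRingHom
      = word α0 αl αmid fun i p => f.toRingHom (d i p)
  set fr := f.toRingHom with hfr
  have hmap : ∀ (a b : ℕ) (β : Matrix (Fin a) (Fin b) ℂ),
      (β.map (algebraMap ℂ R)).map ⇑fr = β.map (algebraMap ℂ R') := by
    intro a b β
    rw [Matrix.map_map]
    exact congrArg (fun g : ℂ → R' => β.map g) (funext fun cc => f.commutes cc)
  have hdiag : ∀ (g : Fin n → R),
      (Matrix.diagonal g).map ⇑fr = Matrix.diagonal (fun p => fr (g p)) := by
    intro g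
    rw [Matrix.diagonal_map (map_zero fr)]
    try rfl
  have hlist : (List.ofFn fun i : Fin m =>
        Matrix.diagonal (d i.castSucc) * (αmid i).map (algebraMap ℂ R)).map fr.mapMatrix
      = List.ofFn fun i : Fin m =>
        Matrix.diagonal (fun p => fr (d i.castSucc p)) * (αmid i).map (algebraMap ℂ R') := by
    rw [List.map_ofFn]
    congr 1
    funext i
    show fr.mapMatrix (Matrix.diagonal (d i.castSucc) * (αmid i).map (algebraMap ℂ R)) = _
    rw [RingHom.mapMatrix_apply, Matrix.map_mul (f := fr), hdiag, hmap]
  unfold word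
  rw [Matrix.map_mul (f := fr), Matrix.map_mul (f := fr), Matrix.map_mul (f := fr),
    hmap, hmap, hdiag]
  rw [show ((List.ofFn fun i : Fin m =>
      Matrix.diagonal (d i.castSucc) * (αmid i).map (algebraMap ℂ R)).prod).map ⇑fr
      = fr.mapMatrix (List.ofFn fun i : Fin m =>
        Matrix.diagonal (d i.castSucc) * (αmid i).map (algebraMap ℂ R)).prod from rfl]
  rw [map_list_prod, hlist]

lemma matrix_map_inj {R R' : Type*} {k n : ℕ} {f : R → R'} (hf : Function.Injective f)
    {X Y : Matrix (Fin k) (Fin n) R} (h : X.map f = Y.map f) : X = Y := by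
  ext i j
  exact hf (congrFun (congrFun h i) j)

end CBAux

open CBAux in
theorem stmt_0 (l : ℕ) (hl : 1 ≤ l) (C : ℝ)
    (S : Subalgebra ℂ (H →L[ℂ] H))
    -- `S` has length at most `l` with constant `C`:
    (hlen : ∀ (k : ℕ) (x : Matrix (Fin k) (Fin k) S),
      ∃ (n : ℕ) (α0 : Matrix (Fin k) (Fin n) ℂ) (αl : Matrix (Fin n) (Fin k) ℂ)
        (αmid : Fin (l - 1) → Matrix (Fin n) (Fin n) ℂ)
        (D : Fin l → (Fin n → S)),
        x.map (fun a => (a : H →L[ℂ] H)) =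
          scalarMat (H := H) α0 *
            (List.ofFn (fun i : Fin (l - 1) =>
              Matrix.diagonal (fun m => ((D (i.castLE (Nat.sub_le l 1)) m : H →L[ℂ] H))) *
                scalarMat (H := H) (αmid i))).prod *
            (Matrix.diagonal fun m => ((D ⟨l - 1, by omega⟩ m : H →L[ℂ] H))) * scalarMat (H := H) αl ∧
        matNorm (scalarMat (H := H) α0) * matNorm (scalarMat (H := H) αl) *
            (∏ i, matNorm (scalarMat (H := H) (αmid i))) *
            (∏ i : Fin l, matNorm (Matrix.diagonal fun m => ((D i m : H →L[ℂ] H)))) ≤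
          C * matNorm (x.map (fun a => (a : H →L[ℂ] H))))
    -- `φ` is a bounded unital homomorphism of `S` into `B(K)` with `‖φ‖ ≤ Cφ`:
    (φ : S →ₐ[ℂ] (K →L[ℂ] K)) (Cφ : ℝ)
    (hφ : ∀ a : S, ‖φ a‖ ≤ Cφ * ‖a‖) :
    -- then `φ` is completely bounded with `‖φ‖_cb ≤ C · Cφ ^ l`:
    ∀ (k : ℕ) (X : Matrix (Fin k) (Fin k) S),
      matNorm (X.map (fun a => φ a)) ≤
        C * Cφ ^ l * matNorm (X.map (fun a => (a : H →L[ℂ] H))) := by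
  intro k X
  obtain ⟨m, rfl⟩ : ∃ m, l = m + 1 := ⟨l - 1, by omega⟩
  obtain ⟨n, α0, αl, αmid, D, heq, hbound⟩ := hlen k X
  by_cases hS : ∀ a : S, a = 0
  · have h1 : matNorm (X.map fun a => φ a) = 0 :=
      matNorm_eq_zero _ fun i j => by
        show φ (X i j) = 0
        rw [hS (X i j), map_zero]
    have h2 : matNorm (X.map fun a => (a : H →L[ℂ] H)) = 0 :=
      matNorm_eq_zero _ fun i j => by
        show ((X i j : S) : H →L[ℂ] H) = 0
        rw [hS (X i j)]
        rfl
    rw [h1, h2, mul_zero]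
  · push_neg at hS
    obtain ⟨a, ha⟩ := hS
    have hCφ : 0 ≤ Cφ := by
      have hpos : 0 < ‖a‖ := norm_pos_iff.mpr ha
      nlinarith [hφ a, norm_nonneg (φ a)]
    have haH : (a : H →L[ℂ] H) ≠ 0 := fun h => ha (Subtype.ext h)
    obtain ⟨ξ, hξ⟩ : ∃ ξ : H, (a : H →L[ℂ] H) ξ ≠ 0 := by
      by_contra h
      push_neg at h
      exact haH (ContinuousLinearMap.ext fun ξ => by rw [h ξ]; rfl)
    set e : H := ‖(a : H →L[ℂ] H) ξ‖⁻¹ • ((a : H →L[ℂ] H) ξ) with he'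
    have he : ‖e‖ = 1 := norm_smul_inv_norm hξ
    -- identify `X` with the word over `S`
    have heqw : X.map (⇑(Subalgebra.val S)) = (word α0 αl αmid D).map (⇑(Subalgebra.val S)) := by
      rw [word_map]
      simp only [scalarMat_eq] at heq
      exact heq
    have hX : X = word α0 αl αmid D := matrix_map_inj Subtype.val_injective heqw
    have hXφ : X.map (fun a => φ a) = word α0 αl αmid (fun i p => φ (D i p)) := by
      calc X.map (fun a => φ a) = (word α0 αl αmid D).map φ := by rw [hX]
        _ = word α0 αl αmid (fun i p => φ (D i p)) := word_map φ _ _ _ _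
    -- real quantities over `H`
    set n0 : ℝ := matNorm (scalarMat (H := H) α0) with hn0
    set nl : ℝ := matNorm (scalarMat (H := H) αl) with hnl
    set nA : Fin m → ℝ := fun i => matNorm (scalarMat (H := H) (αmid i)) with hnA
    set nD : Fin (m + 1) → ℝ :=
      fun i => matNorm (Matrix.diagonal fun p => ((D i p : H →L[ℂ] H))) with hnD
    have hn0' : 0 ≤ n0 := matNorm_nonneg _
    have hnl' : 0 ≤ nl := matNorm_nonneg _
    have hnA' : ∀ i, 0 ≤ nA i := fun i => matNorm_nonneg _
    have hnD' : ∀ i, 0 ≤ nD i := fun i => matNorm_nonneg _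
    -- comparisons between K-side and H-side norms
    have hK0 : matNorm (scalarMat (H := K) α0) ≤ n0 :=
      (matNorm_scalarMat_le α0).trans (le_matNorm_scalarMat e he α0)
    have hKl : matNorm (scalarMat (H := K) αl) ≤ nl :=
      (matNorm_scalarMat_le αl).trans (le_matNorm_scalarMat e he αl)
    have hKmid : ∀ i : Fin m, matNorm (scalarMat (H := K) (αmid i)) ≤ nA i := fun i =>
      (matNorm_scalarMat_le (αmid i)).trans (le_matNorm_scalarMat e he (αmid i))
    have hφD : ∀ i : Fin (m + 1),
        matNorm (Matrix.diagonal fun p => φ (D i p)) ≤ Cφ * nD i := by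
      intro i
      refine matNorm_diagonal_le _ (mul_nonneg hCφ (hnD' i)) fun p => ?_
      refine (hφ (D i p)).trans (mul_le_mul_of_nonneg_left ?_ hCφ)
      have hent := matNorm_entry_le (Matrix.diagonal fun p => ((D i p : H →L[ℂ] H))) p p
      rw [Matrix.diagonal_apply_eq] at hent
      exact hent
    -- splitting the word norm
    have hsplit : matNorm (word (R := K →L[ℂ] K) α0 αl αmid (fun i p => φ (D i p)))
        ≤ matNorm (scalarMat (H := K) α0) *
            ((∏ i : Fin m, matNorm (Matrix.diagonal (fun p => φ (D i.castSucc p)) *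
                scalarMat (H := K) (αmid i))) *
              matNorm ((Matrix.diagonal fun p => φ (D (Fin.last m) p)) *
                scalarMat (H := K) αl)) := by
      unfold word
      simp only [← scalarMat_eq]
      rw [Matrix.mul_assoc, Matrix.mul_assoc]
      refine (matNorm_mul_le _ _).trans (mul_le_mul_of_nonneg_left ?_ (matNorm_nonneg _))
      refine (matNorm_listProd_mul _ _).trans ?_
      rw [List.map_ofFn, List.prod_ofFn]
      exact le_rfl
    have hstep : ∀ i : Fin m,
        matNorm (Matrix.diagonal (fun p => φ (D i.castSucc p)) * scalarMat (H := K) (αmid i))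
          ≤ (Cφ * nD i.castSucc) * nA i := fun i =>
      (matNorm_mul_le _ _).trans (mul_le_mul (hφD i.castSucc) (hKmid i)
        (matNorm_nonneg _) (mul_nonneg hCφ (hnD' _)))
    have hlast : matNorm ((Matrix.diagonal fun p => φ (D (Fin.last m) p)) *
          scalarMat (H := K) αl) ≤ (Cφ * nD (Fin.last m)) * nl :=
      (matNorm_mul_le _ _).trans (mul_le_mul (hφD (Fin.last m)) hKl
        (matNorm_nonneg _) (mul_nonneg hCφ (hnD' _)))
    have hprod : (∏ i : Fin m, matNorm (Matrix.diagonal (fun p => φ (D i.castSucc p)) *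
          scalarMat (H := K) (αmid i))) ≤ ∏ i : Fin m, (Cφ * nD i.castSucc) * nA i :=
      Finset.prod_le_prod (fun i _ => matNorm_nonneg _) (fun i _ => hstep i)
    have hprod' : 0 ≤ ∏ i : Fin m, (Cφ * nD i.castSucc) * nA i :=
      Finset.prod_nonneg fun i _ => mul_nonneg (mul_nonneg hCφ (hnD' _)) (hnA' i)
    have harith : n0 * ((∏ i : Fin m, (Cφ * nD i.castSucc) * nA i) *
          ((Cφ * nD (Fin.last m)) * nl))
        = Cφ ^ (m + 1) * (n0 * nl * (∏ i : Fin m, nA i) * ∏ i : Fin (m + 1), nD i) := by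
      rw [Fin.prod_univ_castSucc (f := nD), Finset.prod_mul_distrib,
        Finset.prod_mul_distrib, Finset.prod_const, Finset.card_univ, Fintype.card_fin]
      ring
    have hbound' : n0 * nl * (∏ i : Fin m, nA i) * (∏ i : Fin (m + 1), nD i)
        ≤ C * matNorm (X.map fun a => (a : H →L[ℂ] H)) := hbound
    calc matNorm (X.map fun a => φ a)
        = matNorm (word α0 αl αmid (fun i p => φ (D i p))) := by rw [hXφ]
      _ ≤ matNorm (scalarMat (H := K) α0) *
            ((∏ i : Fin m, matNorm (Matrix.diagonal (fun p => φ (D i.castSucc p)) *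
                scalarMat (H := K) (αmid i))) *
              matNorm ((Matrix.diagonal fun p => φ (D (Fin.last m) p)) *
                scalarMat (H := K) αl)) := hsplit
      _ ≤ n0 * ((∏ i : Fin m, (Cφ * nD i.castSucc) * nA i) *
            ((Cφ * nD (Fin.last m)) * nl)) := by
          refine mul_le_mul hK0 ?_ ?_ hn0'
          · exact mul_le_mul hprod hlast (matNorm_nonneg _) hprod'
          · exact mul_nonneg (Finset.prod_nonneg fun i _ => matNorm_nonneg _)
              (matNorm_nonneg _)
      _ = Cφ ^ (m + 1) * (n0 * nl * (∏ i : Fin m, nA i) * ∏ i : Fin (m + 1), nD i) := harith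
      _ ≤ Cφ ^ (m + 1) * (C * matNorm (X.map fun a => (a : H →L[ℂ] H))) :=
          mul_le_mul_of_nonneg_left hbound' (pow_nonneg hCφ _)
      _ = C * Cφ ^ (m + 1) * matNorm (X.map fun a => (a : H →L[ℂ] H)) := by ring
end

section
/- Let A be a unital C*-algebra containing a von Neumann algebra M, π : A → M a bounded projection, F ⊆ M a finite-dimensional subfactor with compact unitary group U carrying Haar measure μ. Then π'(a) := ∬ u π(u* a v) v* dμ(u) dμ(v) defines a bounded projection of A onto M that is an F-bimodule map: π'(x a y) = x π'(a) y for x, y ∈ F, with ‖π'‖ ≤ ‖π‖. -/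
/-!
Averaging `π` over the Haar probability measure of `U × U`, where `U` is the compact unitary
group of `F`, gives a map that is `U`-equivariant on both sides by left invariance of the measure.
Each integrand `u π(u* a v) v*` lies in the closed algebra `M`, equals `a` when `a ∈ M`, and has
norm at most `Cπ ‖a‖` because unitaries act isometrically; these properties pass to the average.
A finite-dimensional C⋆-algebra is spanned by its unitaries, so `U`-equivariance upgrades to
`F`-bimodularity.
-/

open MeasureTheory

theorem isCompact_unitary {E : Type*} [NormedRing E] [StarRing E] [CStarRing E] [ProperSpace E] :
    IsCompact (unitary E : Set E) := by
  refine Metric.isCompact_of_isClosed_isBounded isClosed_unitary ?_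
  refine (Metric.isBounded_iff_subset_closedBall 0).2 ⟨‖(1 : E)‖, fun u hu => ?_⟩
  simpa using (CStarRing.norm_coe_unitary_mul ⟨u, hu⟩ 1).le

theorem LinearMap.map_mul_mul_of_mem_span {R A : Type*} [CommSemiring R] [Semiring A] [Algebra R A]
    (f : A →ₗ[R] A) {s : Set A} (h : ∀ u ∈ s, ∀ v ∈ s, ∀ a, f (u * a * v) = u * f a * v)
    {x y : A} (hx : x ∈ Submodule.span R s) (hy : y ∈ Submodule.span R s) (a : A) :
    f (x * a * y) = x * f a * y := by
  have hs : ∀ u ∈ s, f (u * a * y) = u * f a * y := fun u hu =>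
    LinearMap.eqOn_span (f := f ∘ₗ LinearMap.mulLeft R (u * a))
      (g := LinearMap.mulLeft R (u * f a)) (fun v hv => h u hu v hv a) hy
  have := LinearMap.eqOn_span (f := f ∘ₗ LinearMap.mulRight R (a * y))
    (g := LinearMap.mulRight R (f a * y)) (fun u hu => by simpa [mul_assoc] using hs u hu) hx
  simpa [mul_assoc] using this

theorem StarSubalgebra.span_image_unitary {A : Type*} [NormedRing A] [StarRing A] [CStarRing A]
    [NormedAlgebra ℂ A] [StarModule ℂ A] (F : StarSubalgebra ℂ A) [FiniteDimensional ℂ F] :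
    Submodule.span ℂ ((↑) '' (unitary F : Set F)) = Subalgebra.toSubmodule F.toSubalgebra := by
  let _ : CStarAlgebra F := { toCompleteSpace := FiniteDimensional.complete ℂ F }
  have := congrArg (Submodule.map (Subalgebra.toSubmodule F.toSubalgebra).subtype)
    (CStarAlgebra.span_unitary F)
  rwa [Submodule.map_span, Submodule.map_top, Submodule.range_subtype] at this

theorem exists_isProbabilityMeasure_isMulLeftInvariant (G : Type*) [Group G] [TopologicalSpace G]
    [IsTopologicalGroup G] [CompactSpace G] [MeasurableSpace G] [BorelSpace G] :
    ∃ μ : Measure G, IsProbabilityMeasure μ ∧ μ.IsMulLeftInvariant :=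
  ⟨Measure.haarMeasure ⊤,
    ⟨by rw [← TopologicalSpace.PositiveCompacts.coe_top]; exact Measure.haarMeasure_self⟩,
    inferInstance⟩

section Twirl

variable {A G : Type*} [NormedRing A] [StarRing A] [CStarRing A] [NormedAlgebra ℂ A]
  [Group G] [TopologicalSpace G] [MeasurableSpace G]
  (μ : Measure G) (ρ₁ ρ₂ : G →* unitary A)

/-- For `G = U × U` with `U` a compact group of unitaries and `ρ₁ (u, v) = u`, `ρ₂ (u, v) = v`,
this is `a ↦ ∬ u T(u* a v) v* dμ(u) dμ(v)`. -/
noncomputable def twirl (T : A →L[ℂ] A) : A →L[ℂ] A :=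
  ∫ g, ContinuousLinearMap.mulLeftRight ℂ A (ρ₁ g) (star (ρ₂ g : A)) ∘L T ∘L
    ContinuousLinearMap.mulLeftRight ℂ A (star (ρ₁ g : A)) (ρ₂ g) ∂μ

variable {μ ρ₁ ρ₂} [CompactSpace G] [BorelSpace G]

theorem integrable_twirl_integrand [IsFiniteMeasure μ] (hρ₁ : Continuous ρ₁)
    (hρ₂ : Continuous ρ₂) (T : A →L[ℂ] A) (a : A) :
    Integrable (fun g => ρ₁ g * T (star (ρ₁ g : A) * a * ρ₂ g) * star (ρ₂ g : A)) μ := by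
  have h₁ : Continuous fun g => (ρ₁ g : A) := continuous_subtype_val.comp hρ₁
  have h₂ : Continuous fun g => (ρ₂ g : A) := continuous_subtype_val.comp hρ₂
  exact Continuous.integrable_of_hasCompactSupport (by fun_prop)
    (HasCompactSupport.of_compactSpace _)

theorem twirl_apply [IsFiniteMeasure μ] (hρ₁ : Continuous ρ₁) (hρ₂ : Continuous ρ₂)
    (T : A →L[ℂ] A) (a : A) :
    twirl μ ρ₁ ρ₂ T a = ∫ g, ρ₁ g * T (star (ρ₁ g : A) * a * ρ₂ g) * star (ρ₂ g : A) ∂μ := by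
  have h₁ : Continuous fun g => (ρ₁ g : A) := continuous_subtype_val.comp hρ₁
  have h₂ : Continuous fun g => (ρ₂ g : A) := continuous_subtype_val.comp hρ₂
  rw [twirl, ContinuousLinearMap.integral_apply]
  · simp [ContinuousLinearMap.mulLeftRight_apply]
  · exact Continuous.integrable_of_hasCompactSupport (by fun_prop)
      (HasCompactSupport.of_compactSpace _)

theorem twirl_apply_mul_mul [CompleteSpace A] [IsTopologicalGroup G] [IsFiniteMeasure μ]
    [μ.IsMulLeftInvariant] (hρ₁ : Continuous ρ₁) (hρ₂ : Continuous ρ₂)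
    (T : A →L[ℂ] A) (g : G) (a : A) :
    twirl μ ρ₁ ρ₂ T (ρ₁ g * a * star (ρ₂ g : A)) = ρ₁ g * twirl μ ρ₁ ρ₂ T a * star (ρ₂ g : A) := by
  have := (ContinuousLinearMap.mulLeftRight ℂ A (ρ₁ g) (star (ρ₂ g : A))).integral_comp_comm
    (integrable_twirl_integrand (μ := μ) hρ₁ hρ₂ T a)
  simp only [ContinuousLinearMap.mulLeftRight_apply] at this
  rw [twirl_apply hρ₁ hρ₂, twirl_apply hρ₁ hρ₂, ← integral_mul_left_eq_self _ g, ← this]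
  have hcancel (u : unitary A) (x : A) : star (u : A) * (u * x) = x := by
    rw [← mul_assoc, Unitary.star_mul_self_of_mem u.2, one_mul]
  congr 1 with h
  simp [mul_assoc, hcancel]

theorem norm_twirl_apply_le [IsProbabilityMeasure μ] (hρ₁ : Continuous ρ₁) (hρ₂ : Continuous ρ₂)
    {T : A →L[ℂ] A} {C : ℝ} (hT : ∀ a, ‖T a‖ ≤ C * ‖a‖) (a : A) :
    ‖twirl μ ρ₁ ρ₂ T a‖ ≤ C * ‖a‖ := by
  rw [twirl_apply hρ₁ hρ₂]
  refine (norm_integral_le_of_norm_le_const (C := C * ‖a‖) (.of_forall fun g => ?_)).trans_eq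
    (by simp)
  calc ‖(ρ₁ g : A) * T (star (ρ₁ g : A) * a * ρ₂ g) * star (ρ₂ g : A)‖
      = ‖T (star (ρ₁ g : A) * a * ρ₂ g)‖ := by
        rw [mul_assoc, CStarRing.norm_mem_unitary_mul _ (ρ₁ g).2,
          CStarRing.norm_mul_mem_unitary _ (Unitary.star_mem (ρ₂ g).2)]
    _ ≤ C * ‖star (ρ₁ g : A) * a * ρ₂ g‖ := hT _
    _ = C * ‖a‖ := by
        rw [mul_assoc, CStarRing.norm_mem_unitary_mul _ (Unitary.star_mem (ρ₁ g).2),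
          CStarRing.norm_mul_mem_unitary _ (ρ₂ g).2]

variable [StarModule ℂ A] [IsProbabilityMeasure μ] {M : StarSubalgebra ℂ A}

theorem twirl_apply_mem [CompleteSpace A] (hρ₁ : Continuous ρ₁) (hρ₂ : Continuous ρ₂)
    (hM : IsClosed (M : Set A)) (hρ₁M : ∀ g, (ρ₁ g : A) ∈ M) (hρ₂M : ∀ g, (ρ₂ g : A) ∈ M)
    {T : A →L[ℂ] A} (hT : ∀ a, T a ∈ M) (a : A) : twirl μ ρ₁ ρ₂ T a ∈ M := by
  rw [twirl_apply hρ₁ hρ₂]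
  refine (Subalgebra.toSubmodule M.toSubalgebra).restrictScalars ℝ |>.convex.integral_mem hM
    (.of_forall fun g => ?_) (integrable_twirl_integrand hρ₁ hρ₂ T a)
  exact (mul_mem (mul_mem (hρ₁M g) (hT _)) (star_mem (hρ₂M g)) : _ ∈ M)

theorem twirl_apply_of_mem [CompleteSpace A] (hρ₁ : Continuous ρ₁) (hρ₂ : Continuous ρ₂)
    (hρ₁M : ∀ g, (ρ₁ g : A) ∈ M) (hρ₂M : ∀ g, (ρ₂ g : A) ∈ M)
    {T : A →L[ℂ] A} (hT : ∀ m ∈ M, T m = m) {m : A} (hm : m ∈ M) : twirl μ ρ₁ ρ₂ T m = m := by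
  have hconst (g : G) : (ρ₁ g : A) * T (star (ρ₁ g : A) * m * ρ₂ g) * star (ρ₂ g : A) = m := by
    rw [hT _ (mul_mem (mul_mem (star_mem (hρ₁M g)) hm) (hρ₂M g))]
    simp [mul_assoc, ← mul_assoc (ρ₁ g : A)]
  simp [twirl_apply hρ₁ hρ₂, hconst]

end Twirl

theorem stmt_15 {A : Type*} [NormedRing A] [StarRing A] [CStarRing A] [NormedAlgebra ℂ A]
    [StarModule ℂ A] [CompleteSpace A]
    (M : StarSubalgebra ℂ A) (hMclosed : IsClosed (M : Set A))
    (F : StarSubalgebra ℂ A) [FiniteDimensional ℂ F]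
    (hFM : ∀ x, x ∈ F → x ∈ M)
    -- `π` is a bounded projection of `A` onto `M` with `‖π‖ ≤ Cπ`:
    (π : A →ₗ[ℂ] A) (hπr : ∀ a, π a ∈ M) (hπf : ∀ m ∈ M, π m = m)
    (Cπ : ℝ) (hπb : ∀ a, ‖π a‖ ≤ Cπ * ‖a‖) :
    ∃ π' : A →ₗ[ℂ] A,
      (∀ a, π' a ∈ M) ∧ (∀ m ∈ M, π' m = m) ∧
      (∀ a, ‖π' a‖ ≤ Cπ * ‖a‖) ∧
      -- `π'` is an `F`-bimodule map:
      (∀ x ∈ F, ∀ y ∈ F, ∀ a, π' (x * a * y) = x * π' a * y) := by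
  have : CompactSpace (unitary F) := isCompact_iff_compactSpace.mp isCompact_unitary
  let _ : MeasurableSpace (unitary F × unitary F) := borel _
  have : BorelSpace (unitary F × unitary F) := ⟨rfl⟩
  obtain ⟨μ, _, _⟩ := exists_isProbabilityMeasure_isMulLeftInvariant (unitary F × unitary F)
  let ρ : unitary F →* unitary A := (Unitary.map (StarMonoidHom.ofClass F.subtype)).toMonoidHom
  have hρ : Continuous ρ := continuous_induced_rng.2 <|
    (continuous_subtype_val.comp continuous_subtype_val : Continuous fun u : unitary F => (u : A))
  let ρ₁ := ρ.comp (MonoidHom.fst (unitary F) (unitary F))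
  let ρ₂ := ρ.comp (MonoidHom.snd (unitary F) (unitary F))
  have hρ₁ : Continuous ρ₁ := hρ.comp continuous_fst
  have hρ₂ : Continuous ρ₂ := hρ.comp continuous_snd
  have hρM (u : unitary F) : (ρ u : A) ∈ M := hFM _ (u : F).2
  let T := π.mkContinuous Cπ hπb
  refine ⟨twirl μ ρ₁ ρ₂ T, twirl_apply_mem hρ₁ hρ₂ hMclosed
    (fun g => hρM g.1) (fun g => hρM g.2) hπr, fun m => twirl_apply_of_mem hρ₁ hρ₂
    (fun g => hρM g.1) (fun g => hρM g.2) hπf, norm_twirl_apply_le hρ₁ hρ₂ hπb, ?_⟩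
  intro x hx y hy a
  refine LinearMap.map_mul_mul_of_mem_span _ ?_ (by rwa [F.span_image_unitary])
    (by rwa [F.span_image_unitary]) a
  rintro _ ⟨u, hu, rfl⟩ _ ⟨v, hv, rfl⟩ b
  simpa [ρ₁, ρ₂, ρ] using twirl_apply_mul_mul (μ := μ) hρ₁ hρ₂ T (⟨u, hu⟩, star ⟨v, hv⟩) b
end
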